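/- An incremental constraint between finite graphs whose negative part is a single edge between existing nodes admits exactly the factorization structure claimed: if n : L → N is a mono of graphs such that N is obtained from n(L) by adding a single edge e whose endpoints are in n(L), then n is incremental. -/

import Mathlib

open CategoryTheory CategoryTheory.Limits

/-- A directed graph: sets of nodes and edges with source and target functions. -/
structure DirGraph : Type 1 where
  N : Type
  E : Type
  s : E → N
  t : E → N

/-- A graph morphism: node and edge maps commuting with source and target. -/
@[ext]
structure GraphHom (G G' : DirGraph) : Type where
  fN : G.N → G'.N
  fE : G.E → G'.E
  comm_s : ∀ e, fN (G.s e) = G'.s (fE e)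
  comm_t : ∀ e, fN (G.t e) = G'.t (fE e)

instance : Category DirGraph where
  Hom := GraphHom
  id G := ⟨id, id, fun _ => rfl, fun _ => rfl⟩
  comp f g := ⟨g.fN ∘ f.fN, g.fE ∘ f.fE,
    fun e => by simp only [Function.comp_apply, f.comm_s, g.comm_s],
    fun e => by simp only [Function.comp_apply, f.comm_t, g.comm_t]⟩
  id_comp _ := rfl
  comp_id _ := rfl
  assoc _ _ _ := rfl

/-- A mono `n : L ⟶ N` is incremental if any two mono factorizations of it are comparable. -/
def Incremental {L N : DirGraph} (n : L ⟶ N) : Prop :=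
  Mono n ∧ ∀ {X₁ X₂ : DirGraph} (a₁ : L ⟶ X₁) (b₁ : X₁ ⟶ N) (a₂ : L ⟶ X₂) (b₂ : X₂ ⟶ N),
    Mono a₁ → Mono b₁ → Mono a₂ → Mono b₂ → a₁ ≫ b₁ = n → a₂ ≫ b₂ = n →
    (∃ x : X₁ ⟶ X₂, a₁ ≫ x = a₂ ∧ x ≫ b₂ = b₁) ∨
    (∃ x : X₂ ⟶ X₁, a₂ ≫ x = a₁ ∧ x ≫ b₁ = b₂)

/-!
A mono of graphs is injective on nodes (test it against the one-node graph), so a morphism into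
`N` lifts along a mono `X ⟶ N` as soon as its images of nodes and edges lie in those of `X`; the
lift is then automatically compatible with the two factorizations of `n`. In a mono
factorization `L ⟶ X ⟶ N` of `n`, the graph `X` covers every node of `N` and every edge in the
image of `n`, so the only freedom is whether it also covers `e`, and the edge images of any two
factorizations are nested.
-/

namespace DirGraph

def point : DirGraph := ⟨PUnit, Empty, Empty.elim, Empty.elim⟩

def node (G : DirGraph) (v : G.N) : point ⟶ G :=
  ⟨fun _ => v, Empty.elim, fun e => e.elim, fun e => e.elim⟩

theorem node_injective {G : DirGraph} : Function.Injective (node G) :=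
  fun _ _ h => congrFun (congrArg GraphHom.fN h) PUnit.unit

theorem node_comp {G H : DirGraph} (f : G ⟶ H) (v : G.N) : node G v ≫ f = node H (f.fN v) :=
  GraphHom.ext rfl (funext fun e => e.elim)

theorem injective_fN_of_mono {G H : DirGraph} (f : G ⟶ H) [Mono f] :
    Function.Injective f.fN :=
  fun v w h => node_injective ((cancel_mono f).1 (by rw [node_comp, node_comp, h]))

theorem exists_lift_of_range_subset {X Y N : DirGraph} (b : X ⟶ N) [Mono b] (g : Y ⟶ N)
    (hN : Set.range g.fN ⊆ Set.range b.fN) (hE : Set.range g.fE ⊆ Set.range b.fE) :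
    ∃ x : Y ⟶ X, x ≫ b = g := by
  choose xN hxN using fun y => hN ⟨y, rfl⟩
  choose xE hxE using fun k => hE ⟨k, rfl⟩
  have hb := injective_fN_of_mono b
  refine ⟨⟨xN, xE, fun k => hb ?_, fun k => hb ?_⟩, GraphHom.ext (funext hxN) (funext hxE)⟩
  · rw [hxN, g.comm_s, ← hxE, b.comm_s]
  · rw [hxN, g.comm_t, ← hxE, b.comm_t]

theorem exists_comparison_of_range_subset {L X₁ X₂ N : DirGraph} {a₁ : L ⟶ X₁} {b₁ : X₁ ⟶ N}
    {a₂ : L ⟶ X₂} {b₂ : X₂ ⟶ N} [Mono b₂] (h : a₁ ≫ b₁ = a₂ ≫ b₂)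
    (hN : Set.range b₁.fN ⊆ Set.range b₂.fN) (hE : Set.range b₁.fE ⊆ Set.range b₂.fE) :
    ∃ x : X₁ ⟶ X₂, a₁ ≫ x = a₂ ∧ x ≫ b₂ = b₁ := by
  obtain ⟨x, hx⟩ := exists_lift_of_range_subset b₂ b₁ hN hE
  exact ⟨x, (cancel_mono b₂).1 (by rw [Category.assoc, hx, h]), hx⟩

section Factorization

variable {L X N : DirGraph} {a : L ⟶ X} {b : X ⟶ N} {n : L ⟶ N}

theorem range_fE_subset_of_comp_eq (h : a ≫ b = n) : Set.range n.fE ⊆ Set.range b.fE :=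
  h ▸ Set.range_comp_subset_range a.fE b.fE

theorem range_fN_eq_univ_of_comp_eq (h : a ≫ b = n) (hn : Function.Surjective n.fN) :
    Set.range b.fN = Set.univ := by
  subst h
  exact (Function.Surjective.of_comp (f := b.fN) (g := a.fN) hn).range_eq

end Factorization

end DirGraph

open DirGraph in
theorem incremental_of_single_edge_general {L N : DirGraph} (n : L ⟶ N) (hmono : Mono n)
    (hN_nodes : Function.Bijective (GraphHom.fN n))
    (e : N.E)
    (hE : ∀ e' : N.E, e' ∈ Set.range (GraphHom.fE n) ∨ e' = e) :
    Incremental n := by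
  refine ⟨hmono, fun a₁ b₁ a₂ b₂ _ _ _ _ h₁ h₂ => ?_⟩
  have hN₁ := range_fN_eq_univ_of_comp_eq h₁ hN_nodes.2
  have hN₂ := range_fN_eq_univ_of_comp_eq h₂ hN_nodes.2
  by_cases he₂ : e ∈ Set.range b₂.fE
  · refine .inl <|
      exists_comparison_of_range_subset (h₁.trans h₂.symm) (hN₂ ▸ Set.subset_univ _) ?_
    rintro _ ⟨k, rfl⟩
    rcases hE (b₁.fE k) with hk | hk
    · exact range_fE_subset_of_comp_eq h₂ hk
    · exact hk ▸ he₂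
  · refine .inr <|
      exists_comparison_of_range_subset (h₂.trans h₁.symm) (hN₁ ▸ Set.subset_univ _) ?_
    rintro _ ⟨k, rfl⟩
    rcases hE (b₂.fE k) with hk | hk
    · exact range_fE_subset_of_comp_eq h₁ hk
    · exact (he₂ ⟨k, hk⟩).elim

/-- A constraint whose negative part is a single edge between existing nodes is
incremental: if `N` is obtained from the image of `L` by adding one edge `e` whose
endpoints lie in the image, then the mono `n` is incremental. -/
theorem incremental_of_single_edge {L N : DirGraph} (n : L ⟶ N) (hmono : Mono n)
    (hN_nodes : Function.Bijective (GraphHom.fN n))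
    (e : N.E) (he : e ∉ Set.range (GraphHom.fE n))
    (hE : ∀ e' : N.E, e' ∈ Set.range (GraphHom.fE n) ∨ e' = e) :
    Incremental n :=
  incremental_of_single_edge_general n hmono hN_nodes e hE
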